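/- Let F be a field of characteristic different from 2 and m, n ≥ 1. Let M_{m,n}(F)^(+) denote the vector space M_{m+n}(F) of (m+n)×(m+n) matrices with the super-symmetrized product ∘ defined as follows: decompose each matrix x = x₀ + x₁ where x₀ is its block-diagonal part (an m×m block and an n×n block on the diagonal) and x₁ its block-off-diagonal part; then ∘ is the bilinear product with x₀∘y₀ = (1/2)(x₀y₀ + y₀x₀), x₀∘y₁ = (1/2)(x₀y₁ + y₁x₀), x₁∘y₀ = (1/2)(x₁y₀ + y₀x₁), and x₁∘y₁ = (1/2)(x₁y₁ − y₁x₁), products on the right being ordinary matrix products. Then every 1/2-derivation φ of (M_{m+n}(F), ∘) is of the form φ(x) = α·x for some α ∈ F. -/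

import Mathlib

/-- The even (block-diagonal) part of a matrix indexed by `α ⊕ β`:
the entries in the two diagonal blocks are kept, the off-diagonal blocks
are replaced by `0`. -/
def blockDiagPart {F : Type*} [Field F] {α β : Type*}
    (x : Matrix (α ⊕ β) (α ⊕ β) F) : Matrix (α ⊕ β) (α ⊕ β) F :=
  Matrix.of fun i j => if i.isLeft = j.isLeft then x i j else 0

/-- The super-symmetrized product `∘` on block matrices: writing
`x = x₀ + x₁` with `x₀` the block-diagonal part and `x₁` the
block-off-diagonal part, `x ∘ y` is bilinear with
`x₀∘y₀ = (1/2)(x₀y₀ + y₀x₀)`, `x₀∘y₁ = (1/2)(x₀y₁ + y₁x₀)`,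
`x₁∘y₀ = (1/2)(x₁y₀ + y₀x₁)` and `x₁∘y₁ = (1/2)(x₁y₁ − y₁x₁)`. -/
def superMul {F : Type*} [Field F] {α β : Type*} [Fintype α] [Fintype β]
    (x y : Matrix (α ⊕ β) (α ⊕ β) F) : Matrix (α ⊕ β) (α ⊕ β) F :=
  (1 / 2 : F) •
    (blockDiagPart x * blockDiagPart y + blockDiagPart y * blockDiagPart x
      + blockDiagPart x * (y - blockDiagPart y) + (y - blockDiagPart y) * blockDiagPart x
      + (x - blockDiagPart x) * blockDiagPart y + blockDiagPart y * (x - blockDiagPart x)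
      + (x - blockDiagPart x) * (y - blockDiagPart y)
      - (y - blockDiagPart y) * (x - blockDiagPart x))

/-!
Since `1` is a unit for `∘`, a 1/2-derivation satisfies `φ x = x ∘ c = c ∘ x` with `c = φ 1`.
The super-commutator `x ∘ c - c ∘ x` is the commutator of the odd (block-off-diagonal) parts, so
the odd part of `c` commutes with every odd matrix unit and hence vanishes; then
`φ x = (c x + x c) / 2`. For odd `x, y` the 1/2-derivation identity becomes
`c [x, y] + [x, y] c = 2 (x c y - y c x)`, and its `(b, b)` entry at `x = E_ab`, `y = E_bq`
reads `c_qa = δ_qa c_bb`. As both blocks are nonempty, `c` is a scalar matrix.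
-/

open Matrix

section HalfDerivation

variable (F : Type*) {A : Type*} [Field F] [AddCommGroup A] [Module F A]

def IsHalfDerivation (mul : A → A → A) (φ : A → A) : Prop :=
  ∀ x y, φ (mul x y) = (1 / 2 : F) • (mul (φ x) y + mul x (φ y))

variable {F}

theorem IsHalfDerivation.flip {mul : A → A → A} {φ : A → A} (hφ : IsHalfDerivation F mul φ) :
    IsHalfDerivation F (flip mul) φ :=
  fun x y => by rw [Function.flip_def, hφ y x, add_comm]

theorem IsHalfDerivation.apply_eq_mul_apply_unit (hchar : (2 : F) ≠ 0) {mul : A → A → A}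
    {φ : A → A} (hφ : IsHalfDerivation F mul φ) {e : A} (he : ∀ x, mul x e = x) (x : A) :
    φ x = mul x (φ e) := by
  have h := congrArg ((2 : F) • ·) (hφ x e)
  simp only [he, smul_smul, mul_one_div_cancel hchar, one_smul, two_smul] at h
  exact add_left_cancel h

end HalfDerivation

section BlockParts

variable {F : Type*} [Field F] {α β : Type*}

def IsBlockDiagonal (x : Matrix (α ⊕ β) (α ⊕ β) F) : Prop :=
  ∀ p q : α ⊕ β, p.isLeft ≠ q.isLeft → x p q = 0

def IsBlockOffDiagonal (x : Matrix (α ⊕ β) (α ⊕ β) F) : Prop :=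
  ∀ p q : α ⊕ β, p.isLeft = q.isLeft → x p q = 0

theorem blockDiagPart_apply (x : Matrix (α ⊕ β) (α ⊕ β) F) (p q : α ⊕ β) :
    blockDiagPart x p q = if p.isLeft = q.isLeft then x p q else 0 := rfl

theorem blockDiagPart_eq_self_iff {x : Matrix (α ⊕ β) (α ⊕ β) F} :
    blockDiagPart x = x ↔ IsBlockDiagonal x := by
  simp only [Matrix.ext_iff.symm, blockDiagPart_apply, IsBlockDiagonal]
  refine forall₂_congr fun p q => ?_
  split_ifs with h <;> simp [h, eq_comm]

theorem blockDiagPart_eq_zero_iff {x : Matrix (α ⊕ β) (α ⊕ β) F} :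
    blockDiagPart x = 0 ↔ IsBlockOffDiagonal x := by
  simp only [Matrix.ext_iff.symm, blockDiagPart_apply, IsBlockOffDiagonal, Matrix.zero_apply]
  refine forall₂_congr fun p q => ?_
  split_ifs with h <;> simp [h]

theorem isBlockDiagonal_one [DecidableEq α] [DecidableEq β] :
    IsBlockDiagonal (1 : Matrix (α ⊕ β) (α ⊕ β) F) :=
  fun _ _ h => one_apply_ne fun e => h (congrArg Sum.isLeft e)

theorem isBlockOffDiagonal_single [DecidableEq α] [DecidableEq β] {a b : α ⊕ β}
    (h : a.isLeft ≠ b.isLeft) (r : F) : IsBlockOffDiagonal (single a b r) :=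
  fun _ _ hpq => single_apply_of_ne _ _ _ _ _ fun ⟨hp, hq⟩ => h (hp ▸ hq ▸ hpq)

theorem IsBlockOffDiagonal.add {x y : Matrix (α ⊕ β) (α ⊕ β) F}
    (hx : IsBlockOffDiagonal x) (hy : IsBlockOffDiagonal y) : IsBlockOffDiagonal (x + y) :=
  fun p q h => by rw [Matrix.add_apply, hx p q h, hy p q h, add_zero]

theorem IsBlockOffDiagonal.smul {x : Matrix (α ⊕ β) (α ⊕ β) F}
    (hx : IsBlockOffDiagonal x) (r : F) : IsBlockOffDiagonal (r • x) :=
  fun p q h => by rw [Matrix.smul_apply, hx p q h, smul_zero]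

variable [Fintype α] [Fintype β]

theorem IsBlockDiagonal.mul_isBlockOffDiagonal {c x : Matrix (α ⊕ β) (α ⊕ β) F}
    (hc : IsBlockDiagonal c) (hx : IsBlockOffDiagonal x) : IsBlockOffDiagonal (c * x) := by
  intro p q hpq
  rw [Matrix.mul_apply]
  refine Finset.sum_eq_zero fun r _ => ?_
  by_cases hpr : p.isLeft = r.isLeft
  · rw [hx r q (hpr ▸ hpq), mul_zero]
  · rw [hc p r hpr, zero_mul]

theorem IsBlockOffDiagonal.mul_isBlockDiagonal {c x : Matrix (α ⊕ β) (α ⊕ β) F}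
    (hx : IsBlockOffDiagonal x) (hc : IsBlockDiagonal c) : IsBlockOffDiagonal (x * c) := by
  intro p q hpq
  rw [Matrix.mul_apply]
  refine Finset.sum_eq_zero fun r _ => ?_
  by_cases hpr : p.isLeft = r.isLeft
  · rw [hx p r hpr, zero_mul]
  · rw [hc r q (hpq ▸ Ne.symm hpr), mul_zero]

end BlockParts

section SuperMul

variable {F : Type*} [Field F] {α β : Type*} [Fintype α] [Fintype β]

theorem superMul_eq_half_smul (x y : Matrix (α ⊕ β) (α ⊕ β) F) :
    superMul x y = (1 / 2 : F) • (x * y + y * x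
      - (2 : F) • ((y - blockDiagPart y) * (x - blockDiagPart x))) := by
  rw [superMul, two_smul]
  congr 1
  noncomm_ring

theorem superMul_of_isBlockDiagonal_left {x : Matrix (α ⊕ β) (α ⊕ β) F}
    (hx : IsBlockDiagonal x) (y : Matrix (α ⊕ β) (α ⊕ β) F) :
    superMul x y = (1 / 2 : F) • (x * y + y * x) := by
  rw [superMul_eq_half_smul, blockDiagPart_eq_self_iff.mpr hx, sub_self, Matrix.mul_zero,
    smul_zero, sub_zero]

theorem superMul_of_isBlockDiagonal_right (x : Matrix (α ⊕ β) (α ⊕ β) F)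
    {y : Matrix (α ⊕ β) (α ⊕ β) F} (hy : IsBlockDiagonal y) :
    superMul x y = (1 / 2 : F) • (x * y + y * x) := by
  rw [superMul_eq_half_smul, blockDiagPart_eq_self_iff.mpr hy, sub_self, Matrix.zero_mul,
    smul_zero, sub_zero]

theorem superMul_of_isBlockOffDiagonal {x y : Matrix (α ⊕ β) (α ⊕ β) F}
    (hx : IsBlockOffDiagonal x) (hy : IsBlockOffDiagonal y) :
    superMul x y = (1 / 2 : F) • (x * y - y * x) := by
  rw [superMul_eq_half_smul, blockDiagPart_eq_zero_iff.mpr hx, blockDiagPart_eq_zero_iff.mpr hy,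
    sub_zero, sub_zero, two_smul]
  abel_nf

theorem superMul_one_left [DecidableEq α] [DecidableEq β] (hchar : (2 : F) ≠ 0)
    (x : Matrix (α ⊕ β) (α ⊕ β) F) : superMul 1 x = x := by
  rw [superMul_of_isBlockDiagonal_left isBlockDiagonal_one x, Matrix.mul_one,
    Matrix.one_mul, ← two_smul F, smul_smul, one_div_mul_cancel hchar, one_smul]

theorem superMul_one_right [DecidableEq α] [DecidableEq β] (hchar : (2 : F) ≠ 0)
    (x : Matrix (α ⊕ β) (α ⊕ β) F) : superMul x 1 = x := by
  rw [superMul_of_isBlockDiagonal_right x isBlockDiagonal_one, Matrix.mul_one,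
    Matrix.one_mul, ← two_smul F, smul_smul, one_div_mul_cancel hchar, one_smul]

theorem superMul_sub_superMul_swap (hchar : (2 : F) ≠ 0) (x y : Matrix (α ⊕ β) (α ⊕ β) F) :
    superMul x y - superMul y x = (x - blockDiagPart x) * (y - blockDiagPart y)
      - (y - blockDiagPart y) * (x - blockDiagPart x) := by
  rw [superMul_eq_half_smul, superMul_eq_half_smul, ← smul_sub, add_comm (y * x),
    sub_sub_sub_cancel_left, ← smul_sub, smul_smul, one_div_mul_cancel hchar, one_smul]

theorem isBlockDiagonal_of_superMul_comm [DecidableEq α] [DecidableEq β]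
    (hchar : (2 : F) ≠ 0) {c : Matrix (α ⊕ β) (α ⊕ β) F}
    (h : ∀ x, superMul x c = superMul c x) : IsBlockDiagonal c := by
  intro p q hpq
  have hodd := blockDiagPart_eq_zero_iff.mpr (isBlockOffDiagonal_single (Ne.symm hpq) (1 : F))
  have hcomm : Commute (single q p (1 : F)) (c - blockDiagPart c) := by
    have := superMul_sub_superMul_swap hchar (single q p 1) c
    rwa [h, sub_self, hodd, sub_zero, eq_comm, sub_eq_zero] at this
  have := row_eq_zero_of_commute_single hcomm fun e => hpq (congrArg Sum.isLeft e).symm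
  simpa [blockDiagPart_apply, hpq] using this

end SuperMul

section Scalar

variable {F : Type*} [Field F] {α β : Type*}

theorem commutator_identity_of_isHalfDerivation [Fintype α] [Fintype β] (hchar : (2 : F) ≠ 0)
    {c : Matrix (α ⊕ β) (α ⊕ β) F} (hc : IsBlockDiagonal c)
    (hφ : IsHalfDerivation F superMul fun x => (1 / 2 : F) • (c * x + x * c))
    (x y : Matrix (α ⊕ β) (α ⊕ β) F) (hx : IsBlockOffDiagonal x) (hy : IsBlockOffDiagonal y) :
    c * (x * y - y * x) + (x * y - y * x) * c = (2 : F) • (x * c * y - y * c * x) := by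
  have hodd {z} (hz : IsBlockOffDiagonal z) :
      IsBlockOffDiagonal ((1 / 2 : F) • (c * z + z * c)) :=
    ((hc.mul_isBlockOffDiagonal hz).add (hz.mul_isBlockDiagonal hc)).smul _
  have h := hφ x y
  rw [superMul_of_isBlockOffDiagonal hx hy, superMul_of_isBlockOffDiagonal (hodd hx) hy,
    superMul_of_isBlockOffDiagonal hx (hodd hy)] at h
  rw [← sub_eq_zero]
  simp only [Matrix.mul_add, Matrix.add_mul, Matrix.mul_sub, Matrix.sub_mul, Matrix.mul_smul,
    Matrix.smul_mul, Matrix.mul_assoc] at h ⊢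
  linear_combination (norm := skip) (8 : F) • h
  match_scalars <;> field_simp <;> ring

theorem apply_eq_ite_of_commutator_identity [Fintype α] [Fintype β] [DecidableEq α]
    [DecidableEq β] (hchar : (2 : F) ≠ 0) {c : Matrix (α ⊕ β) (α ⊕ β) F}
    (hid : ∀ x y, IsBlockOffDiagonal x → IsBlockOffDiagonal y →
      c * (x * y - y * x) + (x * y - y * x) * c = (2 : F) • (x * c * y - y * c * x))
    {a b q : α ⊕ β} (hab : a.isLeft ≠ b.isLeft) (hbq : b.isLeft ≠ q.isLeft) :
    c q a = if q = a then c b b else 0 := by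
  have hab' : a ≠ b := fun e => hab (congrArg Sum.isLeft e)
  have hqb : q ≠ b := fun e => hbq (congrArg Sum.isLeft e).symm
  have h := congrFun (congrFun (hid _ _ (isBlockOffDiagonal_single hab (1 : F))
    (isBlockOffDiagonal_single hbq (1 : F))) b) b
  split_ifs with hqa
  · subst hqa
    simp [Matrix.mul_sub, Matrix.sub_mul, hqb, hqb.symm] at h
    exact mul_left_cancel₀ hchar (by linear_combination h)
  · simp [hab', hab'.symm, hqb.symm, hqa] at h
    exact h.resolve_left hchar

theorem exists_eq_smul_one_of_apply_eq_ite [DecidableEq α] [DecidableEq β]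
    [Nonempty α] [Nonempty β] {c : Matrix (α ⊕ β) (α ⊕ β) F} (hc : IsBlockDiagonal c)
    (h : ∀ a b q : α ⊕ β, a.isLeft ≠ b.isLeft → b.isLeft ≠ q.isLeft →
      c q a = if q = a then c b b else 0) :
    ∃ μ : F, c = μ • 1 := by
  obtain ⟨i⟩ := ‹Nonempty α›
  obtain ⟨j⟩ := ‹Nonempty β›
  have hopp (p : α ⊕ β) : ∃ b, b.isLeft ≠ p.isLeft ∧ c b b = c (.inr j) (.inr j) := by
    rcases p with _ | _
    · exact ⟨.inr j, by simp, rfl⟩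
    · exact ⟨.inl i, by simp, by simpa using h (.inl i) (.inr j) (.inl i) (by simp) (by simp)⟩
  refine ⟨c (.inr j) (.inr j), Matrix.ext fun p q => ?_⟩
  by_cases hpq : p.isLeft = q.isLeft
  · obtain ⟨b, hb, hbb⟩ := hopp q
    rw [h q b p (Ne.symm hb) (by rwa [hpq]), Matrix.smul_apply, one_apply, hbb]
    split_ifs <;> simp
  · rw [hc p q hpq, Matrix.smul_apply, one_apply_ne fun e => hpq (congrArg Sum.isLeft e),
      smul_zero]

end Scalar

/-- **1/2-derivations of the Jordan superalgebra `M_{m,n}(F)⁺`.**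
Let `F` be a field of characteristic not `2` and `m, n ≥ 1`.  Every
`1/2`-derivation `φ` of `M_{m,n}(F)⁺`, i.e. the space of
`(m+n) × (m+n)` matrices with the super-symmetrized product `∘`,
is of the form `φ x = α • x` for some `α ∈ F`. -/
theorem half_derivation_of_Mmn_plus
    {F : Type*} [Field F] (hchar : (2 : F) ≠ 0)
    (m n : ℕ) (hm : 1 ≤ m) (hn : 1 ≤ n)
    (φ : Matrix (Fin m ⊕ Fin n) (Fin m ⊕ Fin n) F
      →ₗ[F] Matrix (Fin m ⊕ Fin n) (Fin m ⊕ Fin n) F)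
    (hφ : ∀ x y : Matrix (Fin m ⊕ Fin n) (Fin m ⊕ Fin n) F,
      φ (superMul x y) = (1 / 2 : F) • (superMul (φ x) y + superMul x (φ y))) :
    ∃ α : F, ∀ x : Matrix (Fin m ⊕ Fin n) (Fin m ⊕ Fin n) F, φ x = α • x := by
  have : Nonempty (Fin m) := Fin.pos_iff_nonempty.mp hm
  have : Nonempty (Fin n) := Fin.pos_iff_nonempty.mp hn
  have hφ' : IsHalfDerivation F superMul φ := hφ
  set c := φ 1
  have hright (x) : φ x = superMul x c :=
    hφ'.apply_eq_mul_apply_unit hchar (superMul_one_right hchar) x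
  have hleft (x) : φ x = superMul c x :=
    hφ'.flip.apply_eq_mul_apply_unit hchar (superMul_one_left hchar) x
  have hc : IsBlockDiagonal c :=
    isBlockDiagonal_of_superMul_comm hchar fun x => (hright x).symm.trans (hleft x)
  have hφc (x) : φ x = (1 / 2 : F) • (c * x + x * c) :=
    (hleft x).trans (superMul_of_isBlockDiagonal_left hc x)
  have hid := commutator_identity_of_isHalfDerivation hchar hc (funext hφc ▸ hφ')
  obtain ⟨μ, hμ⟩ := exists_eq_smul_one_of_apply_eq_ite hc fun _ _ _ =>
    apply_eq_ite_of_commutator_identity hchar hid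
  refine ⟨μ, fun x => ?_⟩
  rw [hφc, hμ, Matrix.smul_mul, Matrix.mul_smul, Matrix.one_mul, Matrix.mul_one, ← two_smul F,
    smul_smul, one_div_mul_cancel hchar, one_smul]
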